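/- arXiv:1409.5853 — 6 statements merged into one kernel-verified Lean document; each statement's English description precedes it below -/
import Mathlib

section
/- Let G and G₁ be finite simple graphs on n vertices with adjacency matrices A and A₁. If there exists a matrix P ∈ GL(n,ℤ) ∩ O(n,ℝ) with PᵀAP = A₁, then G and G₁ are isomorphic graphs. -/
/-!
Over `ℤ`, orthogonality `PᵀP = 1` forces every column of `P` to have squared norm `1`, hence
to be `±` a standard basis vector; orthogonality of distinct columns makes the supports
distinct, so `P = Q D` with `Q` a permutation matrix and `D` a diagonal sign matrix. Then
`PᵀAP = D (QᵀAQ) D` differs from `QᵀAQ` only by entry signs, and since `QᵀAQ` and the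
adjacency matrix `A₁` have nonnegative entries, `QᵀAQ = A₁`.
-/

open Matrix

theorem Int.exists_abs_eq_one_of_sum_sq_eq_one {ι : Type*} [Fintype ι] {x : ι → ℤ}
    (h : ∑ i, x i ^ 2 = 1) : ∃ i, |x i| = 1 ∧ ∀ j ≠ i, x j = 0 := by
  classical
  obtain ⟨i, hi⟩ : ∃ i, x i ≠ 0 := by
    by_contra! h0
    simp [h0] at h
  have hsplit := Finset.add_sum_erase Finset.univ (fun k => x k ^ 2) (Finset.mem_univ i)
  have hle : 1 ≤ x i ^ 2 := by nlinarith [Int.one_le_abs hi, sq_abs (x i)]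
  have hrest_nonneg : 0 ≤ ∑ k ∈ Finset.univ.erase i, x k ^ 2 :=
    Finset.sum_nonneg fun k _ => sq_nonneg (x k)
  have hrest : ∑ k ∈ Finset.univ.erase i, x k ^ 2 = 0 := by linarith
  refine ⟨i, ?_, fun j hj => ?_⟩
  · have hsq : |x i| ^ 2 = 1 := by rw [sq_abs]; linarith
    exact (pow_eq_one_iff_of_nonneg (abs_nonneg _) two_ne_zero).1 hsq
  · have := (Finset.sum_eq_zero_iff_of_nonneg fun k _ => sq_nonneg (x k)).1 hrest j
      (Finset.mem_erase.2 ⟨hj, Finset.mem_univ j⟩)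
    exact pow_eq_zero_iff two_ne_zero |>.1 this

namespace Matrix

variable {n : Type*} [Fintype n] [DecidableEq n]

theorem transpose_mul_self_eq_one_of_map {R S : Type*} [NonAssocSemiring R] [NonAssocSemiring S]
    (f : R →+* S) (hf : Function.Injective f) {P : Matrix n n R}
    (h : (P.map f)ᵀ * P.map f = 1) : Pᵀ * P = 1 :=
  map_injective hf <| show (Pᵀ * P).map f = (1 : Matrix n n R).map f by
    rw [Matrix.map_mul, transpose_map, h, Matrix.map_one _ f.map_zero f.map_one]

theorem exists_perm_diagonal_of_transpose_mul_self_eq_one {P : Matrix n n ℤ}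
    (hP : Pᵀ * P = 1) :
    ∃ (σ : Equiv.Perm n) (ε : n → ℤ), (∀ i, |ε i| = 1) ∧ P = σ.permMatrix ℤ * diagonal ε := by
  have hcol : ∀ j j', ∑ i, P i j * P i j' = (1 : Matrix n n ℤ) j j' := fun j j' => by
    rw [← hP, mul_apply]; rfl
  choose f hf hzero using fun j => Int.exists_abs_eq_one_of_sum_sq_eq_one
    (x := fun i => P i j) (by simpa [sq] using hcol j j)
  have hinj : Function.Injective f := by
    intro j j' hjj'
    by_contra hne
    have h := hcol j j'
    rw [Finset.sum_eq_single (f j) (fun i _ hi => by simp [hzero j i hi]) (by simp),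
      one_apply_ne hne] at h
    rcases mul_eq_zero.1 h with h0 | h0
    · simpa [h0] using hf j
    · rw [hjj'] at h0
      simpa [h0] using hf j'
  set σ := (Equiv.ofBijective f hinj.bijective_of_finite).symm
  refine ⟨σ, fun j => P (f j) j, hf, ?_⟩
  ext i j
  have hσ : σ i = j ↔ i = f j := Equiv.symm_apply_eq _
  by_cases hij : i = f j
  · subst hij
    simp [mul_diagonal, hσ]
  · simp [mul_diagonal, hσ, hij, hzero j i hij]

theorem transpose_permMatrix_mul_mul_permMatrix {R : Type*} [NonAssocSemiring R]
    (σ : Equiv.Perm n) (M : Matrix n n R) :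
    (σ.permMatrix R)ᵀ * M * σ.permMatrix R = M.submatrix σ.symm σ.symm := by
  rw [transpose_permMatrix, Equiv.Perm.permMatrix, Equiv.Perm.permMatrix,
    PEquiv.toMatrix_toPEquiv_mul, PEquiv.mul_toMatrix_toPEquiv, submatrix_submatrix]
  rfl

theorem eq_of_diagonal_mul_mul_diagonal_eq {R : Type*} [Ring R] [LinearOrder R]
    [IsStrictOrderedRing R] {ε : n → R} (hε : ∀ i, |ε i| = 1) {B C : Matrix n n R}
    (hB : ∀ i j, 0 ≤ B i j) (hC : ∀ i j, 0 ≤ C i j) (h : diagonal ε * B * diagonal ε = C) :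
    B = C := by
  ext i j
  have hij : ε i * B i j * ε j = C i j := by rw [← h, mul_diagonal, diagonal_mul]
  calc B i j = |ε i * B i j * ε j| := by simp [abs_mul, hε, abs_of_nonneg (hB i j)]
    _ = C i j := by rw [hij, abs_of_nonneg (hC i j)]

end Matrix

theorem SimpleGraph.adjMatrix_nonneg {V R : Type*} [Semiring R] [PartialOrder R]
    [IsOrderedRing R] (G : SimpleGraph V) [DecidableRel G.Adj] (i j : V) :
    0 ≤ G.adjMatrix R i j := by
  rw [adjMatrix_apply]
  split_ifs <;> simp

theorem stmt_1_general (n : ℕ) (G G₁ : SimpleGraph (Fin n))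
    [DecidableRel G.Adj] [DecidableRel G₁.Adj]
    (P : Matrix (Fin n) (Fin n) ℤ)
    (hO : (P.map fun x : ℤ => (x : ℝ))ᵀ * (P.map fun x : ℤ => (x : ℝ)) = 1)
    (hcong : Pᵀ * G.adjMatrix ℤ * P = G₁.adjMatrix ℤ) :
    ∃ σ : Equiv.Perm (Fin n),
      (σ.permMatrix ℤ)ᵀ * G.adjMatrix ℤ * σ.permMatrix ℤ = G₁.adjMatrix ℤ := by
  obtain ⟨σ, ε, hε, rfl⟩ := exists_perm_diagonal_of_transpose_mul_self_eq_one
    (transpose_mul_self_eq_one_of_map (Int.castRingHom ℝ) Int.cast_injective hO)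
  refine ⟨σ, eq_of_diagonal_mul_mul_diagonal_eq hε ?_ G₁.adjMatrix_nonneg ?_⟩
  · rw [transpose_permMatrix_mul_mul_permMatrix]
    exact fun i j => G.adjMatrix_nonneg _ _
  · rw [← hcong, transpose_mul, diagonal_transpose]
    simp only [Matrix.mul_assoc]

/-- If the adjacency matrices of two graphs are related by congruence by a matrix that is
both in `GL(n,ℤ)` and orthogonal over `ℝ`, then the graphs are isomorphic (i.e. their
adjacency matrices are related by a permutation matrix). -/
theorem stmt_1 (n : ℕ) (G G₁ : SimpleGraph (Fin n))
    [DecidableRel G.Adj] [DecidableRel G₁.Adj]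
    (P : Matrix (Fin n) (Fin n) ℤ)
    (hGL : IsUnit P.det)
    (hO : (P.map fun x : ℤ => (x : ℝ))ᵀ * (P.map fun x : ℤ => (x : ℝ)) = 1)
    (hcong : Pᵀ * G.adjMatrix ℤ * P = G₁.adjMatrix ℤ) :
    ∃ σ : Equiv.Perm (Fin n),
      (σ.permMatrix ℤ)ᵀ * G.adjMatrix ℤ * σ.permMatrix ℤ = G₁.adjMatrix ℤ :=
  stmt_1_general n G G₁ P hO hcong
end

section
/- Let G be a connected finite simple graph with combinatorial Laplacian M, and let u > 0. Every entry of the inverse matrix (M + uI)⁻¹ is strictly positive. More precisely, writing (M+uI)⁻¹_{x,y} = (−1)^{x+y} A_{y,x} / det(M+uI) where A_{y,x} is the (y,x)-cofactor of M+uI, all coefficients of the polynomial (−1)^{x+y} A_{y,x} ∈ ℤ[u] are nonnegative, and the polynomial is nonzero. -/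
/-!
Let `M` be a real matrix with nonpositive off-diagonal entries and nonnegative row sums, and
`u > 0`. At a negative minimum of `v`, every term of `((M + uI) v)_m` other than `u v_m` is
nonpositive, so `(M + uI) v ≥ 0` forces `v ≥ 0`. Hence `M + uI` is invertible with entrywise
nonnegative inverse, and `det (M + uI)`, the value at `u` of a monic polynomial that has no root in
`[u, ∞)`, is positive. Thus `adj (M + uI) = det (M + uI) • (M + uI)⁻¹ ≥ 0`, and letting `u → 0`
gives `adj M ≥ 0`.

Expanding the cofactor of `M + XI` along the rows, the coefficient of `X^k` in `adj (M + XI)_{xy}`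
is the sum of the cofactors `adj (M_s)_{xy}` over `|s| = k`, `y ∉ s`, where `M_s` replaces the rows
in `s` by rows of the identity. Each `M_s` is again of the above kind, so all coefficients are
nonnegative. For the Laplacian of a connected graph, the zero set of a column of `(M + uI)⁻¹` is
closed under adjacency and misses the diagonal index, so it is empty; evaluating the cofactor
polynomial at `1` then shows that it is nonzero.
-/

open Matrix Polynomial Finset

namespace Polynomial.Monic

theorem eval_pos_of_forall_ge_ne_zero {p : ℝ[X]} (hp : p.Monic) {a : ℝ}
    (h : ∀ x, a ≤ x → p.eval x ≠ 0) : 0 < p.eval a := by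
  rcases eq_or_ne p.natDegree 0 with hdeg | hdeg
  · simp [hp.natDegree_eq_zero.mp hdeg]
  have htend := p.tendsto_atTop_of_leadingCoeff_nonneg
    (natDegree_pos_iff_degree_pos.mp (Nat.pos_of_ne_zero hdeg)) (by simp [hp.leadingCoeff])
  obtain ⟨b, hb, hab⟩ :=
    ((htend.eventually_gt_atTop 0).and (Filter.eventually_ge_atTop a)).exists
  by_contra! ha
  obtain ⟨z, hz, hz0⟩ := intermediate_value_Icc hab p.continuous.continuousOn ⟨ha, hb.le⟩
  exact h z hz.1 hz0

end Polynomial.Monic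

namespace Matrix

variable {ι : Type*} [DecidableEq ι]

def updateRowsOne {R : Type*} [Zero R] [One R] (M : Matrix ι ι R) (s : Finset ι) :
    Matrix ι ι R :=
  of fun i j => if i ∈ s then (1 : Matrix ι ι R) i j else M i j

@[simp]
theorem updateRowsOne_apply {R : Type*} [Zero R] [One R] (M : Matrix ι ι R) (s : Finset ι)
    (i j : ι) : M.updateRowsOne s i j = if i ∈ s then (1 : Matrix ι ι R) i j else M i j :=
  rfl

variable [Fintype ι]

theorem mulVec_transpose_nonsing_inv_apply {R : Type*} [CommRing R] {A : Matrix ι ι R}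
    (hA : IsUnit A.det) (y i : ι) : (A *ᵥ A⁻¹ᵀ y) i = (1 : Matrix ι ι R) i y :=
  congrFun (congrFun (mul_nonsing_inv A hA) i) y

theorem adjugate_apply_eq_det_mul_inv_apply {K : Type*} [Field K] {A : Matrix ι ι K}
    (hA : A.det ≠ 0) (i j : ι) : adjugate A i j = A.det * A⁻¹ i j := by
  rw [inv_def, smul_apply, smul_eq_mul, Ring.inverse_eq_inv', ← mul_assoc,
    mul_inv_cancel₀ hA, one_mul]

section Polynomial

variable {R : Type*} [CommRing R]

theorem eval_adjugate_map_C_add_X_smul_one_apply (M : Matrix ι ι R) (r : R) (x y : ι) :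
    (adjugate (M.map C + (X : R[X]) • 1) x y).eval r = adjugate (M + r • 1) x y := by
  have hmap : (M.map C + (X : R[X]) • 1).map (eval r) = M + r • 1 := by
    ext i j
    by_cases hij : i = j <;> simp [hij]
  have h := congrFun (congrFun ((evalRingHom r).map_adjugate (M.map C + (X : R[X]) • 1)) x) y
  rwa [RingHom.mapMatrix_apply, RingHom.mapMatrix_apply, coe_evalRingHom, hmap] at h

/-- Each row `i ≠ y` of the cofactor matrix splits as (row `i` of `X • 1`) + (row `i` of `M`);
expanding the determinant multilinearly, choosing the `X`-part on the rows of `s` gives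
`X ^ #s` times a cofactor of `M.updateRowsOne s`. -/
theorem adjugate_map_C_add_X_smul_one_apply (M : Matrix ι ι R) (x y : ι) :
    adjugate (M.map C + (X : R[X]) • 1) x y =
      ∑ s with y ∉ s, X ^ #s * C (adjugate (M.updateRowsOne s) x y) := by
  set D : Matrix ι ι R[X] := ((X : R[X]) • (1 : Matrix ι ι R[X])).updateRow y 0
  set B : Matrix ι ι R[X] := (M.updateRow y (Pi.single x 1)).map C
  have hsplit : (M.map C + (X : R[X]) • 1).updateRow y (Pi.single x 1) = D + B := by
    ext i j
    by_cases hi : i = y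
    · subst hi
      by_cases hj : j = x <;> simp [D, B, hj]
    · simp [D, B, hi, add_comm]
  have hexpand : det (D + B) = ∑ s : Finset ι, det (s.piecewise D B) :=
    detRowAlternating.map_add_univ D B
  have hterm : ∀ s : Finset ι, det (s.piecewise D B) =
      if y ∈ s then 0 else X ^ #s * C (adjugate (M.updateRowsOne s) x y) := by
    intro s
    split_ifs with hy
    · exact det_eq_zero_of_row_eq_zero y fun j => by simp [Finset.piecewise, D, hy]
    set E := ((M.updateRowsOne s).updateRow y (Pi.single x 1)).map C
    have hE : s.piecewise D B = s.piecewise (fun i => (X : R[X]) • E i) E := by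
      ext i j
      by_cases hi : i ∈ s
      · have hiy : i ≠ y := ne_of_mem_of_not_mem hi hy
        simp [Finset.piecewise, D, E, hi, hiy, one_apply, apply_ite]
      · simp [Finset.piecewise, B, E, hi, updateRow_apply]
    rw [hE, adjugate_apply, RingHom.map_det]
    exact (detRowAlternating.map_piecewise_smul _ E s).trans (by rw [prod_const, smul_eq_mul]; rfl)
  rw [adjugate_apply, hsplit, hexpand, sum_filter]
  exact sum_congr rfl fun s _ => (hterm s).trans (by split_ifs <;> rfl)

end Polynomial

structure IsLaplacianLike (M : Matrix ι ι ℝ) : Prop where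
  apply_nonpos_of_ne : ∀ i j, i ≠ j → M i j ≤ 0
  sum_row_nonneg : ∀ i, 0 ≤ ∑ j, M i j

namespace IsLaplacianLike

variable {M : Matrix ι ι ℝ} {u : ℝ}

theorem updateRowsOne (hM : IsLaplacianLike M) (s : Finset ι) :
    IsLaplacianLike (M.updateRowsOne s) where
  apply_nonpos_of_ne i j hij := by
    by_cases hi : i ∈ s
    · simp [hi, one_apply_ne hij]
    · simpa [hi] using hM.apply_nonpos_of_ne i j hij
  sum_row_nonneg i := by
    by_cases hi : i ∈ s
    · simp [hi, one_apply]
    · simpa [hi] using hM.sum_row_nonneg i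

theorem nonneg_of_mulVec_nonneg (hM : IsLaplacianLike M) (hu : 0 < u) {v : ι → ℝ}
    (hv : ∀ i, 0 ≤ ((M + u • 1) *ᵥ v) i) (i : ι) : 0 ≤ v i := by
  by_contra! hi
  have : Nonempty ι := ⟨i⟩
  obtain ⟨m, hm⟩ := Finite.exists_min v
  have hvm : v m < 0 := (hm i).trans_lt hi
  have hsplit : (M *ᵥ v) m = ∑ j, M m j * (v j - v m) + v m * ∑ j, M m j := by
    simp [mulVec, dotProduct, mul_sub, mul_sum, mul_comm]
  have hdiff : ∑ j, M m j * (v j - v m) ≤ 0 := by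
    refine sum_nonpos fun j _ => ?_
    rcases eq_or_ne m j with rfl | hmj
    · simp
    · exact mul_nonpos_of_nonpos_of_nonneg (hM.apply_nonpos_of_ne m j hmj) (sub_nonneg.2 (hm j))
  have hrow : v m * ∑ j, M m j ≤ 0 := mul_nonpos_of_nonpos_of_nonneg hvm.le (hM.sum_row_nonneg m)
  have := hv m
  rw [add_mulVec, smul_mulVec, one_mulVec, Pi.add_apply, hsplit] at this
  simp only [Pi.smul_apply, smul_eq_mul] at this
  nlinarith

theorem det_add_smul_one_ne_zero (hM : IsLaplacianLike M) (hu : 0 < u) :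
    det (M + u • 1) ≠ 0 := by
  intro h
  obtain ⟨v, hv0, hv⟩ := exists_mulVec_eq_zero_iff.mpr h
  refine hv0 (funext fun i => le_antisymm ?_ (hM.nonneg_of_mulVec_nonneg hu (by simp [hv]) i))
  simpa using hM.nonneg_of_mulVec_nonneg hu (v := -v) (by simp [mulVec_neg, hv]) i

theorem inv_add_smul_one_nonneg (hM : IsLaplacianLike M) (hu : 0 < u) (x y : ι) :
    0 ≤ (M + u • 1)⁻¹ x y :=
  hM.nonneg_of_mulVec_nonneg hu (v := (M + u • 1)⁻¹ᵀ y) (fun i => by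
    rw [mulVec_transpose_nonsing_inv_apply (hM.det_add_smul_one_ne_zero hu).isUnit, one_apply]
    positivity) x

theorem inv_add_smul_one_pos (hM : IsLaplacianLike M) {G : SimpleGraph ι} (hG : G.Connected)
    (hadj : ∀ i j, G.Adj i j → M i j < 0) (hu : 0 < u) (x y : ι) :
    0 < (M + u • 1)⁻¹ x y := by
  set A := M + u • 1
  set v := A⁻¹ᵀ y
  have hv : ∀ i, 0 ≤ v i := fun i => hM.inv_add_smul_one_nonneg hu i y
  have hrow : ∀ i, ∑ j, A i j * v j = (1 : Matrix ι ι ℝ) i y :=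
    mulVec_transpose_nonsing_inv_apply (hM.det_add_smul_one_ne_zero hu).isUnit y
  have hzero : ∀ i, v i = 0 → i ≠ y ∧ ∀ j, G.Adj i j → v j = 0 := by
    intro i hi
    have hterm : ∀ j, A i j * v j ≤ 0 := by
      intro j
      rcases eq_or_ne i j with rfl | hij
      · simp [hi]
      · simpa [A, one_apply_ne hij] using
          mul_nonpos_of_nonpos_of_nonneg (hM.apply_nonpos_of_ne i j hij) (hv j)
    have hsum : ∑ j, A i j * v j ≤ 0 := sum_nonpos fun j _ => hterm j
    refine ⟨fun hiy => ?_, fun j hij => ?_⟩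
    · rw [hrow, hiy, one_apply_eq] at hsum
      exact one_pos.not_ge hsum
    · have h0 : ∑ j, A i j * v j = 0 :=
        le_antisymm hsum (by rw [hrow, one_apply]; positivity)
      have := (sum_eq_zero_iff_of_nonpos fun j _ => hterm j).1 h0 j (mem_univ j)
      simp only [A, add_apply, smul_apply, one_apply_ne hij.ne, smul_zero, add_zero] at this
      exact (mul_eq_zero.1 this).resolve_left (hadj i j hij).ne
  refine (hv x).lt_of_ne' fun hx => ?_
  obtain ⟨w⟩ := hG.preconnected x y
  have hprop : ∀ {a b : ι}, G.Walk a b → v a = 0 → v b = 0 := by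
    intro a b w
    induction w with
    | nil => exact id
    | cons h _ ih => exact fun ha => ih ((hzero _ ha).2 _ h)
  exact (hzero y (hprop w hx)).1 rfl

theorem det_add_smul_one_pos (hM : IsLaplacianLike M) (hu : 0 < u) : 0 < det (M + u • 1) := by
  have heval : ∀ r : ℝ, (-M).charpoly.eval r = det (M + r • 1) := fun r => by
    rw [eval_charpoly, sub_neg_eq_add, add_comm, smul_one_eq_diagonal, scalar_apply]
  rw [← heval]
  exact (-M).charpoly_monic.eval_pos_of_forall_ge_ne_zero fun r hr =>
    heval r ▸ hM.det_add_smul_one_ne_zero (hu.trans_le hr)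

theorem adjugate_nonneg (hM : IsLaplacianLike M) (x y : ι) : 0 ≤ adjugate M x y := by
  have hcont : Continuous fun r : ℝ => adjugate (M + r • 1) x y :=
    (continuous_const.add (continuous_id.smul continuous_const)).matrix_adjugate.matrix_elem x y
  have hlim := (hcont.tendsto 0).mono_left (nhdsWithin_le_nhds (s := Set.Ioi 0))
  rw [zero_smul, add_zero] at hlim
  refine ge_of_tendsto hlim (eventually_nhdsWithin_of_forall fun r (hr : 0 < r) => ?_)
  rw [adjugate_apply_eq_det_mul_inv_apply (hM.det_add_smul_one_ne_zero hr)]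
  exact mul_nonneg (hM.det_add_smul_one_pos hr).le (hM.inv_add_smul_one_nonneg hr x y)

theorem coeff_adjugate_map_C_add_X_smul_one_nonneg (hM : IsLaplacianLike M) (x y : ι) (k : ℕ) :
    0 ≤ (adjugate (M.map C + (X : ℝ[X]) • 1) x y).coeff k := by
  rw [adjugate_map_C_add_X_smul_one_apply, finsetSum_coeff]
  refine sum_nonneg fun s _ => ?_
  rw [mul_comm, coeff_C_mul_X_pow]
  split_ifs
  exacts [(hM.updateRowsOne s).adjugate_nonneg x y, le_rfl]

end IsLaplacianLike

end Matrix

namespace SimpleGraph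

variable {V : Type*} [Fintype V] [DecidableEq V] (G : SimpleGraph V) [DecidableRel G.Adj]

theorem lapMatrix_apply_of_ne {R : Type*} [AddGroupWithOne R] {i j : V} (hij : i ≠ j) :
    G.lapMatrix R i j = -(if G.Adj i j then 1 else 0) := by
  simp [lapMatrix, degMatrix, hij]

theorem lapMatrix_apply_neg_of_adj {i j : V} (h : G.Adj i j) : G.lapMatrix ℝ i j < 0 := by
  rw [lapMatrix_apply_of_ne G h.ne, if_pos h]
  norm_num

theorem map_lapMatrix {R S : Type*} [Ring R] [Ring S] (f : R →+* S) :
    (G.lapMatrix R).map f = G.lapMatrix S := by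
  ext i j
  rcases eq_or_ne i j with rfl | hij
  · simp [lapMatrix, degMatrix]
  · by_cases h : G.Adj i j <;> simp [lapMatrix_apply_of_ne G hij, h]

theorem isLaplacianLike_lapMatrix : (G.lapMatrix ℝ).IsLaplacianLike where
  apply_nonpos_of_ne i j hij := by
    rw [lapMatrix_apply_of_ne G hij]
    split_ifs <;> norm_num
  sum_row_nonneg i := by
    simpa [mulVec, dotProduct] using (congrFun (G.lapMatrix_mulVec_const_eq_zero (R := ℝ)) i).ge

theorem map_adjugate_lapMatrix_add_X_smul_one_apply (x y : V) :
    ((G.lapMatrix ℤ[X] + (X : ℤ[X]) • 1).adjugate x y).map (Int.castRingHom ℝ) =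
      ((G.lapMatrix ℝ).map C + (X : ℝ[X]) • 1).adjugate x y := by
  have hmat : (G.lapMatrix ℤ[X] + (X : ℤ[X]) • 1).map (mapRingHom (Int.castRingHom ℝ)) =
      (G.lapMatrix ℝ).map C + (X : ℝ[X]) • 1 := by
    rw [Matrix.map_add _ (map_add _), G.map_lapMatrix, ← G.map_lapMatrix C]
    ext i j
    by_cases hij : i = j <;> simp [hij]
  have h := congrFun (congrFun ((mapRingHom (Int.castRingHom ℝ)).map_adjugate
    (G.lapMatrix ℤ[X] + (X : ℤ[X]) • 1)) x) y
  rwa [RingHom.mapMatrix_apply, RingHom.mapMatrix_apply, hmat] at h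

end SimpleGraph

/-- For a connected graph with Laplacian `M` and `u > 0`, every entry of `(M + uI)⁻¹` is
strictly positive; more precisely, writing the entries of the inverse as
`(−1)^{x+y} A_{y,x} / det(M+uI)` (i.e. via the adjugate of `M + uI` over `ℤ[u]`), all
coefficients of the polynomial `(−1)^{x+y} A_{y,x} = adjugate(M + X•I) x y ∈ ℤ[u]` are
nonnegative and the polynomial is nonzero. -/
theorem stmt_4 (n : ℕ) (G : SimpleGraph (Fin n)) [DecidableRel G.Adj]
    (hconn : G.Connected) :
    (∀ u : ℝ, 0 < u → ∀ x y : Fin n,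
      0 < (G.lapMatrix ℝ + u • (1 : Matrix (Fin n) (Fin n) ℝ))⁻¹ x y) ∧
    ∀ x y : Fin n,
      (∀ k : ℕ, 0 ≤ ((G.lapMatrix (Polynomial ℤ) +
          (Polynomial.X : Polynomial ℤ) • 1).adjugate x y).coeff k) ∧
      (G.lapMatrix (Polynomial ℤ) +
          (Polynomial.X : Polynomial ℤ) • 1).adjugate x y ≠ 0 := by
  have hL := G.isLaplacianLike_lapMatrix
  have hpos : ∀ u : ℝ, 0 < u → ∀ x y, 0 < (G.lapMatrix ℝ + u • 1)⁻¹ x y := fun u hu =>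
    hL.inv_add_smul_one_pos hconn (fun i j => G.lapMatrix_apply_neg_of_adj) hu
  refine ⟨hpos, fun x y => ?_⟩
  have hcast := G.map_adjugate_lapMatrix_add_X_smul_one_apply x y
  refine ⟨fun k => ?_, fun h => ?_⟩
  · have := hL.coeff_adjugate_map_C_add_X_smul_one_nonneg x y k
    rwa [← hcast, coeff_map, eq_intCast, Int.cast_nonneg_iff] at this
  · have h1 := congrArg (eval 1) hcast
    rw [h, Polynomial.map_zero, eval_zero, eval_adjugate_map_C_add_X_smul_one_apply,
      adjugate_apply_eq_det_mul_inv_apply (hL.det_add_smul_one_ne_zero one_pos)] at h1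
    exact (mul_pos (hL.det_add_smul_one_pos one_pos) (hpos 1 one_pos x y)).ne h1
end

section
/- Let G₁ be a graph with a vertex X, let G₂ be a graph with distinguished vertices Y₁,…,Y_k, and let G(X) be the graph obtained as the disjoint union of G₁ and G₂ together with an edge from X to each Y_i. Then the equivalence class over ℤ of the quadratic form represented by the combinatorial Laplacian of G(X) does not depend on the choice of the vertex X in G₁. Equivalently, for any two vertices X, X' of G₁, there exists T ∈ GL(N,ℤ) with Tᵀ·L(G(X))·T = L(G(X')), where N = |G₁| + |G₂|. -/
open Matrix

/-- The graph `G(X)`: disjoint union of `G₁` and `G₂` together with an edge between the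
vertex `X` of `G₁` and each of the distinguished vertices `Y₁, …, Y_k` of `G₂`. -/
def glueGraph {V₁ V₂ : Type*} (G₁ : SimpleGraph V₁) (G₂ : SimpleGraph V₂)
    (X : V₁) {k : ℕ} (Y : Fin k → V₂) : SimpleGraph (V₁ ⊕ V₂) where
  Adj v w :=
    match v, w with
    | Sum.inl a, Sum.inl b => G₁.Adj a b
    | Sum.inr a, Sum.inr b => G₂.Adj a b
    | Sum.inl a, Sum.inr b => a = X ∧ ∃ i, Y i = b
    | Sum.inr a, Sum.inl b => b = X ∧ ∃ i, Y i = a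
  symm := by
    refine ⟨?_⟩
    rintro (a | a) (b | b) h
    · exact G₁.adj_symm h
    · exact h
    · exact h
    · exact G₂.adj_symm h
  loopless := by
    refine ⟨?_⟩
    rintro (a | a) h
    · exact G₁.irrefl h
    · exact G₂.irrefl h

instance glueGraph.adjDecidable {V₁ V₂ : Type*} [DecidableEq V₁] [DecidableEq V₂]
    (G₁ : SimpleGraph V₁) (G₂ : SimpleGraph V₂) (X : V₁) {k : ℕ} (Y : Fin k → V₂)
    [DecidableRel G₁.Adj] [DecidableRel G₂.Adj] :
    DecidableRel (glueGraph G₁ G₂ X Y).Adj := fun v w =>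
  match v, w with
  | Sum.inl a, Sum.inl b => inferInstanceAs (Decidable (G₁.Adj a b))
  | Sum.inr a, Sum.inr b => inferInstanceAs (Decidable (G₂.Adj a b))
  | Sum.inl a, Sum.inr b => inferInstanceAs (Decidable (a = X ∧ ∃ i, Y i = b))
  | Sum.inr a, Sum.inl b => inferInstanceAs (Decidable (b = X ∧ ∃ i, Y i = a))

/-! The Laplacian of `G(X)` is `L(G₁) ⊕ L(G₂)` plus one rank-one term `(e_X - e_y)(e_X - e_y)ᵀ`
for each distinguished vertex `y`. The unimodular substitution `x_w ↦ x_w + x_X` on the coordinates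
of `G₂` fixes the block part, since a Laplacian kills constant vectors, and sends each `e_X - e_y`
to `-e_y`. So it carries `L(G(X))` to `L(G₁) ⊕ (L(G₂) + Σ_y e_y e_yᵀ)`, which does not involve `X`,
and composing one such substitution with the inverse of another gives the congruence. -/

section Congruence

variable {n R : Type*} [Fintype n] [CommRing R]

theorem Matrix.transpose_mul_vecMulVec_self_mul (T : Matrix n n R) (d : n → R) :
    Tᵀ * vecMulVec d d * T = vecMulVec (d ᵥ* T) (d ᵥ* T) := by
  rw [mul_vecMulVec, vecMulVec_mul, mulVec_transpose]

variable [DecidableEq n]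

theorem Matrix.det_one_add_vecMulVec (u v : n → R) : (1 + vecMulVec u v).det = 1 + v ⬝ᵥ u := by
  rw [vecMulVec_eq Unit, det_one_add_replicateCol_mul_replicateRow]

theorem Matrix.vecMul_one_add_vecMulVec (d u v : n → R) :
    d ᵥ* (1 + vecMulVec u v) = d + (d ⬝ᵥ u) • v := by
  rw [vecMul_add, vecMul_one, vecMul_vecMulVec]

theorem Matrix.IsSymm.transpose_mul_mul_one_add_vecMulVec {M : Matrix n n R} (hM : M.IsSymm)
    {u : n → R} (hu : M *ᵥ u = 0) (v : n → R) :
    (1 + vecMulVec u v)ᵀ * M * (1 + vecMulVec u v) = M := by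
  have hMT : M * (1 + vecMulVec u v) = M := by
    rw [mul_add, mul_one, mul_vecMulVec, hu, zero_vecMulVec, add_zero]
  rw [mul_assoc, hMT]
  conv_lhs => rw [← hM.eq]
  rw [← transpose_mul, hMT, hM.eq]

theorem Matrix.exists_isUnit_det_transpose_mul_mul_eq {A B P Q : Matrix n n R}
    (hP : IsUnit P.det) (hQ : IsUnit Q.det) (h : Pᵀ * A * P = Qᵀ * B * Q) :
    ∃ T : Matrix n n R, IsUnit T.det ∧ Tᵀ * A * T = B := by
  refine ⟨P * Q⁻¹, by simpa [det_mul] using hP.mul (isUnit_nonsing_inv_det Q hQ), ?_⟩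
  calc (P * Q⁻¹)ᵀ * A * (P * Q⁻¹) = (Q⁻¹)ᵀ * (Pᵀ * A * P) * Q⁻¹ := by
        simp only [transpose_mul, Matrix.mul_assoc]
    _ = (Q * Q⁻¹)ᵀ * B * (Q * Q⁻¹) := by
        rw [h]; simp only [transpose_mul, Matrix.mul_assoc]
    _ = B := by rw [mul_nonsing_inv Q hQ, transpose_one, Matrix.one_mul, Matrix.mul_one]

end Congruence

namespace glueGraph

open Finset

variable {V₁ V₂ : Type*} {G₁ : SimpleGraph V₁} {G₂ : SimpleGraph V₂} {k : ℕ} {Y : Fin k → V₂}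
  {X : V₁}

@[simp] theorem adj_inl_inl {a b : V₁} :
    (glueGraph G₁ G₂ X Y).Adj (.inl a) (.inl b) ↔ G₁.Adj a b := Iff.rfl

@[simp] theorem adj_inr_inr {a b : V₂} :
    (glueGraph G₁ G₂ X Y).Adj (.inr a) (.inr b) ↔ G₂.Adj a b := Iff.rfl

@[simp] theorem adj_inl_inr {a : V₁} {b : V₂} :
    (glueGraph G₁ G₂ X Y).Adj (.inl a) (.inr b) ↔ a = X ∧ ∃ i, Y i = b := Iff.rfl

@[simp] theorem adj_inr_inl {a : V₂} {b : V₁} :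
    (glueGraph G₁ G₂ X Y).Adj (.inr a) (.inl b) ↔ b = X ∧ ∃ i, Y i = a := Iff.rfl

variable [Fintype V₁] [Fintype V₂] [DecidableEq V₁] [DecidableEq V₂]
  [DecidableRel G₁.Adj] [DecidableRel G₂.Adj]

theorem degree_inl (a : V₁) :
    (glueGraph G₁ G₂ X Y).degree (.inl a) =
      G₁.degree a + if a = X then #(univ.image Y) else 0 := by
  zify
  rw [SimpleGraph.degree_eq_sum_if_adj, SimpleGraph.degree_eq_sum_if_adj, Fintype.sum_sum_type]
  congr 1
  split_ifs with h <;> simp [h]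

theorem degree_inr (b : V₂) :
    (glueGraph G₁ G₂ X Y).degree (.inr b) =
      G₂.degree b + if b ∈ univ.image Y then 1 else 0 := by
  zify
  rw [SimpleGraph.degree_eq_sum_if_adj, SimpleGraph.degree_eq_sum_if_adj, Fintype.sum_sum_type,
    add_comm]
  congr 1
  by_cases hb : ∃ i, Y i = b <;> simp [hb]

theorem lapMatrix_eq {R : Type*} [Ring R] :
    (glueGraph G₁ G₂ X Y).lapMatrix R = fromBlocks (G₁.lapMatrix R) 0 0 (G₂.lapMatrix R) +
      ∑ y ∈ univ.image Y, vecMulVec (Pi.single (.inl X) 1 - Pi.single (.inr y) 1)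
        (Pi.single (.inl X) 1 - Pi.single (.inr y) 1) := by
  ext (a | a) (b | b) <;>
    simp [SimpleGraph.lapMatrix, SimpleGraph.degMatrix, degree_inl, degree_inr,
      SimpleGraph.adjMatrix_apply, Matrix.sum_apply, vecMulVec_apply, Pi.single_apply,
      diagonal_apply] <;>
    split_ifs <;> simp_all

variable {R : Type*} [CommRing R]

variable (V₂ R) in
/-- Congruence by `shear V₂ R X` adds the rows and columns indexed by `V₂` to those of `X`. -/
def shear (X : V₁) : Matrix (V₁ ⊕ V₂) (V₁ ⊕ V₂) R :=
  1 + vecMulVec (Sum.elim 0 1) (Pi.single (.inl X) 1)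

theorem det_shear (X : V₁) : (shear V₂ R X).det = 1 := by
  simp [shear, det_one_add_vecMulVec]

theorem shear_transpose_mul_lapMatrix_mul :
    (shear V₂ R X)ᵀ * (glueGraph G₁ G₂ X Y).lapMatrix R * shear V₂ R X =
      fromBlocks (G₁.lapMatrix R) 0 0 (G₂.lapMatrix R) +
        ∑ y ∈ univ.image Y, vecMulVec (Pi.single (.inr y) 1) (Pi.single (.inr y) 1) := by
  have hsymm : (fromBlocks (G₁.lapMatrix R) 0 0 (G₂.lapMatrix R)).IsSymm :=
    (G₁.isSymm_lapMatrix (R := R)).fromBlocks (by simp) (G₂.isSymm_lapMatrix (R := R))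
  have hker : fromBlocks (G₁.lapMatrix R) 0 0 (G₂.lapMatrix R) *ᵥ Sum.elim 0 1 = 0 := by
    simp [fromBlocks_mulVec, Pi.one_def, SimpleGraph.lapMatrix_mulVec_const_eq_zero]
  rw [lapMatrix_eq, mul_add (shear V₂ R X)ᵀ, add_mul _ _ (shear V₂ R X), shear,
    hsymm.transpose_mul_mul_one_add_vecMulVec hker, Finset.mul_sum, Finset.sum_mul]
  congr 1
  refine Finset.sum_congr rfl fun y _ => ?_
  have hshift : (Pi.single (.inl X) 1 - Pi.single (.inr y) 1 : V₁ ⊕ V₂ → R) +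
      ((Pi.single (.inl X) 1 - Pi.single (.inr y) 1 : V₁ ⊕ V₂ → R) ⬝ᵥ Sum.elim 0 1) •
        Pi.single (.inl X) 1 = -Pi.single (.inr y) 1 := by
    simp only [sub_dotProduct, single_one_dotProduct, Sum.elim_inl, Sum.elim_inr, Pi.zero_apply,
      Pi.one_apply, zero_sub, neg_one_smul]
    abel
  rw [transpose_mul_vecMulVec_self_mul, vecMul_one_add_vecMulVec, hshift, neg_vecMulVec,
    vecMulVec_neg, neg_neg]

end glueGraph

/-- The equivalence class over `ℤ` of the quadratic form of the combinatorial Laplacian of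
`G(X)` does not depend on the choice of the vertex `X` of `G₁`. -/
theorem stmt_6 {V₁ V₂ : Type*} [Fintype V₁] [Fintype V₂] [DecidableEq V₁] [DecidableEq V₂]
    (G₁ : SimpleGraph V₁) (G₂ : SimpleGraph V₂)
    [DecidableRel G₁.Adj] [DecidableRel G₂.Adj]
    {k : ℕ} (Y : Fin k → V₂) (X X' : V₁) :
    ∃ T : Matrix (V₁ ⊕ V₂) (V₁ ⊕ V₂) ℤ, IsUnit T.det ∧
      Tᵀ * (glueGraph G₁ G₂ X Y).lapMatrix ℤ * T =
        (glueGraph G₁ G₂ X' Y).lapMatrix ℤ := by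
  refine exists_isUnit_det_transpose_mul_mul_eq (P := glueGraph.shear V₂ ℤ X)
    (Q := glueGraph.shear V₂ ℤ X') (by simp [glueGraph.det_shear])
    (by simp [glueGraph.det_shear]) ?_
  rw [glueGraph.shear_transpose_mul_lapMatrix_mul, glueGraph.shear_transpose_mul_lapMatrix_mul]
end

section
/- Define the wedge sum G₁ ∨_{X,Y} G₂ of two connected graphs G₁, G₂ with respect to a vertex X of G₁ and a vertex Y of G₂ as the quotient of their disjoint union identifying X with Y. Then the equivalence class over ℤ of the quadratic form of the combinatorial Laplacian of G₁ ∨_{X,Y} G₂ is independent of the choices of X and Y. -/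
open Matrix

/-- The wedge sum `G₁ ∨_{X,Y} G₂`: the quotient of the disjoint union of `G₁` and `G₂`
identifying the vertex `X` of `G₁` with the vertex `Y` of `G₂` (modelled on the vertex set
`V₁ ⊕ {v : V₂ // v ≠ Y}`, with `X` playing the role of the identified vertex). -/
def wedgeGraph {V₁ V₂ : Type*} (G₁ : SimpleGraph V₁) (G₂ : SimpleGraph V₂)
    (X : V₁) (Y : V₂) : SimpleGraph (V₁ ⊕ {v : V₂ // v ≠ Y}) where
  Adj v w :=
    match v, w with
    | Sum.inl a, Sum.inl b => G₁.Adj a b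
    | Sum.inr a, Sum.inr b => G₂.Adj a b
    | Sum.inl a, Sum.inr b => a = X ∧ G₂.Adj Y b
    | Sum.inr a, Sum.inl b => b = X ∧ G₂.Adj Y a
  symm := by
    constructor
    rintro (a | a) (b | b) h
    · exact G₁.adj_symm h
    · exact h
    · exact h
    · exact G₂.adj_symm h
  loopless := by
    constructor
    rintro (a | a) h
    · exact G₁.loopless.irrefl a h
    · exact G₂.loopless.irrefl a.1 h

instance wedgeGraph.adjDecidable {V₁ V₂ : Type*} [DecidableEq V₁] [DecidableEq V₂]
    (G₁ : SimpleGraph V₁) (G₂ : SimpleGraph V₂) (X : V₁) (Y : V₂)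
    [DecidableRel G₁.Adj] [DecidableRel G₂.Adj] :
    DecidableRel (wedgeGraph G₁ G₂ X Y).Adj := fun v w =>
  match v, w with
  | Sum.inl a, Sum.inl b => inferInstanceAs (Decidable (G₁.Adj a b))
  | Sum.inr a, Sum.inr b => inferInstanceAs (Decidable (G₂.Adj a.1 b.1))
  | Sum.inl a, Sum.inr b => inferInstanceAs (Decidable (a = X ∧ G₂.Adj Y b.1))
  | Sum.inr a, Sum.inl b => inferInstanceAs (Decidable (b = X ∧ G₂.Adj Y a.1))

/-! A function on the vertices of `G₁ ∨_{X,Y} G₂` is a pair of functions on `V₁` and `V₂` that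
agree at `X` and `Y`, and the Laplacian form of the wedge is the sum of the Laplacian forms of `G₁`
and `G₂` evaluated on the two components. A Laplacian form does not change when a constant is added
to its argument, so shifting the `V₂`-component by a constant, chosen so that it matches the
`V₁`-component at the new base points, is a unimodular change of variables carrying the Laplacian
form of `G₁ ∨_{X',Y'} G₂` to that of `G₁ ∨_{X,Y} G₂`. -/

namespace SimpleGraph

variable {V W R : Type*} [Fintype V] [DecidableEq V] [CommRing R]

theorem dotProduct_lapMatrix_mulVec (G : SimpleGraph V) [DecidableRel G.Adj] (x y : V → R) :
    x ⬝ᵥ (G.lapMatrix R *ᵥ y) = ∑ i, ∑ j, if G.Adj i j then x i * (y i - y j) else 0 := by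
  rw [lapMatrix, sub_mulVec, dotProduct_sub, dotProduct_mulVec_adjMatrix, degMatrix]
  simp only [dotProduct, mulVec_diagonal, G.degree_eq_sum_if_adj (R := R), Finset.sum_mul,
    Finset.mul_sum, ← Finset.sum_sub_distrib]
  refine Finset.sum_congr rfl fun i _ => Finset.sum_congr rfl fun j _ => ?_
  split_ifs <;> ring

theorem dotProduct_lapMatrix_mulVec_add_const (G : SimpleGraph V) [DecidableRel G.Adj]
    (x y : V → R) (c d : R) :
    (x + fun _ => c) ⬝ᵥ (G.lapMatrix R *ᵥ (y + fun _ => d)) = x ⬝ᵥ (G.lapMatrix R *ᵥ y) := by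
  have hconst (r : R) : G.lapMatrix R *ᵥ (fun _ => r) = 0 := by
    rw [show (fun _ => r : V → R) = r • fun _ => 1 by ext; simp, mulVec_smul,
      lapMatrix_mulVec_const_eq_zero, smul_zero]
  rw [mulVec_add, hconst, add_zero, add_dotProduct, dotProduct_mulVec (fun _ => c),
    ← mulVec_transpose, G.isSymm_lapMatrix R, hconst, zero_dotProduct, add_zero]

theorem lapMatrix_sup_of_disjoint {G H : SimpleGraph V} [DecidableRel G.Adj] [DecidableRel H.Adj]
    [DecidableRel (G ⊔ H).Adj] (h : Disjoint G H) :
    (G ⊔ H).lapMatrix R = G.lapMatrix R + H.lapMatrix R := by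
  ext i j
  have hGH : ¬(G.Adj i j ∧ H.Adj i j) := fun hGH => h.le_bot ⟨hGH.1, hGH.2⟩
  simp only [lapMatrix, degMatrix, adjMatrix_apply, Matrix.sub_apply, Matrix.add_apply,
    diagonal_apply, degree, neighborFinset_sup_of_disjoint i h, Finset.card_disjUnion, sup_adj]
  split_ifs <;> simp_all

theorem dotProduct_lapMatrix_map_mulVec [Fintype W] [DecidableEq W] (G : SimpleGraph V)
    [DecidableRel G.Adj] (f : V ↪ W) [DecidableRel (G.map f).Adj] (x y : W → R) :
    x ⬝ᵥ ((G.map f).lapMatrix R *ᵥ y) = (x ∘ f) ⬝ᵥ (G.lapMatrix R *ᵥ (y ∘ f)) := by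
  have hmap {i j : W} (h : (G.map f).Adj i j) : i ∈ Set.range f ∧ j ∈ Set.range f := by
    obtain ⟨u, v, -, rfl, rfl⟩ := (map_adj f G i j).1 h
    exact ⟨⟨u, rfl⟩, ⟨v, rfl⟩⟩
  rw [dotProduct_lapMatrix_mulVec, dotProduct_lapMatrix_mulVec]
  symm
  refine Fintype.sum_of_injective f f.injective _ _ (fun i hi => ?_) fun u => ?_
  · exact Finset.sum_eq_zero fun j _ => if_neg fun h => hi (hmap h).1
  · refine Fintype.sum_of_injective f f.injective _ _ (fun j hj => ?_) fun v => by simp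
    exact if_neg fun h => hj (hmap h).2

end SimpleGraph

theorem Matrix.exists_isUnit_det_transpose_mul_reindex_mul_eq {n m R : Type*} [Fintype n]
    [Fintype m] [DecidableEq m] [CommRing R] (e : n ≃ m) (A : Matrix n n R)
    (B : Matrix m m R) (φ : (m → R) ≃ₗ[R] (n → R))
    (hφ : ∀ x y, φ x ⬝ᵥ (A *ᵥ φ y) = x ⬝ᵥ (B *ᵥ y)) :
    ∃ T : Matrix m m R, IsUnit T.det ∧ Tᵀ * reindex e e A * T = B := by
  let ψ := φ.trans (LinearEquiv.funCongrLeft R R e.symm)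
  have hψ (x : m → R) : LinearMap.toMatrix' ψ.toLinearMap *ᵥ x = φ x ∘ e.symm := by
    rw [← Matrix.toLin'_apply, Matrix.toLin'_toMatrix']
    rfl
  refine ⟨LinearMap.toMatrix' ψ.toLinearMap, ?_, ?_⟩
  · rw [LinearMap.det_toMatrix']
    exact ψ.isUnit_det'
  · refine (Matrix.toLinearMap₂' R (S₁ := R) (S₂ := R)).injective (LinearMap.ext₂ fun x y => ?_)
    rw [Matrix.toLinearMap₂'_apply', Matrix.toLinearMap₂'_apply', ← mulVec_mulVec, ← mulVec_mulVec,
      dotProduct_mulVec x, vecMul_transpose, hψ, hψ, reindex_apply, submatrix_mulVec_equiv,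
      Equiv.symm_symm, comp_equiv_symm_dotProduct]
    simp only [Function.comp_assoc, Equiv.symm_comp_self, Function.comp_id, hφ]

section Wedge

variable {V₁ V₂ R : Type*} [DecidableEq V₂] [CommRing R]

def wedgeIncl (X : V₁) (Y : V₂) : V₂ ↪ V₁ ⊕ {v : V₂ // v ≠ Y} where
  toFun v := if h : v = Y then .inl X else .inr ⟨v, h⟩
  inj' u v huv := by
    by_cases hu : u = Y <;> by_cases hv : v = Y <;> simp_all

@[simp]
theorem wedgeIncl_self (X : V₁) (Y : V₂) : wedgeIncl X Y Y = .inl X :=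
  dif_pos rfl

@[simp]
theorem wedgeIncl_of_ne (X : V₁) {Y v : V₂} (hv : v ≠ Y) :
    wedgeIncl X Y v = .inr ⟨v, hv⟩ :=
  dif_neg hv

@[simp]
theorem wedgeIncl_eq_inl_iff {X : V₁} {Y v : V₂} {a : V₁} :
    wedgeIncl X Y v = .inl a ↔ v = Y ∧ X = a := by
  by_cases hv : v = Y <;> simp [wedgeIncl, hv]

@[simp]
theorem wedgeIncl_eq_inr_iff {X : V₁} {Y v : V₂} {s : {v : V₂ // v ≠ Y}} :
    wedgeIncl X Y v = .inr s ↔ v = s := by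
  by_cases hv : v = Y <;> simp [wedgeIncl, hv, Subtype.ext_iff, Ne.symm s.2]

theorem wedgeGraph_eq_sup_map (G₁ : SimpleGraph V₁) (G₂ : SimpleGraph V₂) (X : V₁) (Y : V₂) :
    wedgeGraph G₁ G₂ X Y = G₁.map Function.Embedding.inl ⊔ G₂.map (wedgeIncl X Y) := by
  ext (a | s) (b | t) <;> simp [wedgeGraph]
  · exact and_comm.trans (and_congr_right' eq_comm)
  · rw [G₂.adj_comm]; exact and_comm.trans (and_congr_right' eq_comm)

theorem disjoint_map_inl_map_wedgeIncl (G₁ : SimpleGraph V₁) (G₂ : SimpleGraph V₂) (X : V₁)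
    (Y : V₂) :
    Disjoint (G₁.map Function.Embedding.inl) (G₂.map (wedgeIncl X Y)) := by
  rw [disjoint_iff]
  ext i j
  simp only [SimpleGraph.inf_adj, SimpleGraph.map_adj, SimpleGraph.bot_adj, iff_false]
  rintro ⟨⟨a, b, -, rfl, rfl⟩, u, v, huv, hu, hv⟩
  simp only [Function.Embedding.inl_apply, wedgeIncl_eq_inl_iff] at hu hv
  exact huv.ne (hu.1.trans hv.1.symm)

variable (R) in
def wedgeRebase (X X' : V₁) (Y Y' : V₂) :
    (V₁ ⊕ {v : V₂ // v ≠ Y'} → R) →ₗ[R] (V₁ ⊕ {v : V₂ // v ≠ Y} → R) where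
  toFun x := Sum.elim (x ∘ Sum.inl)
    fun s => x (wedgeIncl X' Y' s) + (x (.inl X) - x (wedgeIncl X' Y' Y))
  map_add' x y := by ext (a | s) <;> simp; ring
  map_smul' c x := by ext (a | s) <;> simp; ring

theorem wedgeRebase_comp_inl (X X' : V₁) (Y Y' : V₂) (x : V₁ ⊕ {v : V₂ // v ≠ Y'} → R) :
    wedgeRebase R X X' Y Y' x ∘ Sum.inl = x ∘ Sum.inl :=
  rfl

theorem wedgeRebase_comp_wedgeIncl (X X' : V₁) (Y Y' : V₂) (x : V₁ ⊕ {v : V₂ // v ≠ Y'} → R) :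
    wedgeRebase R X X' Y Y' x ∘ wedgeIncl X Y =
      x ∘ wedgeIncl X' Y' + fun _ => x (.inl X) - x (wedgeIncl X' Y' Y) := by
  ext v
  by_cases hv : v = Y
  · subst hv
    simp [wedgeRebase]
  · simp [wedgeRebase, wedgeIncl_of_ne X hv]

theorem wedgeRebase_comp_wedgeRebase (X X' : V₁) (Y Y' : V₂) :
    wedgeRebase R X' X Y' Y ∘ₗ wedgeRebase R X X' Y Y' = LinearMap.id := by
  refine LinearMap.ext fun x => funext fun w => ?_
  rcases w with a | s
  · rfl
  · have h := congrFun (wedgeRebase_comp_wedgeIncl X X' Y Y' x)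
    simp only [Function.comp_apply, Pi.add_apply] at h
    change wedgeRebase R X X' Y Y' x (wedgeIncl X Y s) + (wedgeRebase R X X' Y Y' x (.inl X') -
      wedgeRebase R X X' Y Y' x (wedgeIncl X Y Y')) = x (.inr s)
    rw [h, h, wedgeIncl_self, wedgeIncl_of_ne X' s.2]
    change _ + (x (.inl X') - _) = _
    ring

variable [Fintype V₁] [DecidableEq V₁] [Fintype V₂]
  (G₁ : SimpleGraph V₁) (G₂ : SimpleGraph V₂) [DecidableRel G₁.Adj] [DecidableRel G₂.Adj]

theorem dotProduct_lapMatrix_wedgeGraph_mulVec (X : V₁) (Y : V₂)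
    (x y : V₁ ⊕ {v : V₂ // v ≠ Y} → R) :
    x ⬝ᵥ ((wedgeGraph G₁ G₂ X Y).lapMatrix R *ᵥ y) =
      (x ∘ Sum.inl) ⬝ᵥ (G₁.lapMatrix R *ᵥ (y ∘ Sum.inl)) +
        (x ∘ wedgeIncl X Y) ⬝ᵥ (G₂.lapMatrix R *ᵥ (y ∘ wedgeIncl X Y)) := by
  classical
  have hL : (wedgeGraph G₁ G₂ X Y).lapMatrix R =
      (G₁.map Function.Embedding.inl).lapMatrix R + (G₂.map (wedgeIncl X Y)).lapMatrix R := by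
    rw [← SimpleGraph.lapMatrix_sup_of_disjoint (disjoint_map_inl_map_wedgeIncl G₁ G₂ X Y)]
    congr 1
    exact wedgeGraph_eq_sup_map G₁ G₂ X Y
  rw [hL, add_mulVec, dotProduct_add, SimpleGraph.dotProduct_lapMatrix_map_mulVec,
    SimpleGraph.dotProduct_lapMatrix_map_mulVec]
  rfl

theorem dotProduct_lapMatrix_wedgeGraph_wedgeRebase (X X' : V₁) (Y Y' : V₂)
    (x y : V₁ ⊕ {v : V₂ // v ≠ Y'} → R) :
    wedgeRebase R X X' Y Y' x ⬝ᵥ ((wedgeGraph G₁ G₂ X Y).lapMatrix R *ᵥ wedgeRebase R X X' Y Y' y) =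
      x ⬝ᵥ ((wedgeGraph G₁ G₂ X' Y').lapMatrix R *ᵥ y) := by
  rw [dotProduct_lapMatrix_wedgeGraph_mulVec, dotProduct_lapMatrix_wedgeGraph_mulVec,
    wedgeRebase_comp_inl, wedgeRebase_comp_inl, wedgeRebase_comp_wedgeIncl,
    wedgeRebase_comp_wedgeIncl, SimpleGraph.dotProduct_lapMatrix_mulVec_add_const]

end Wedge

theorem stmt_8_general {V₁ V₂ : Type*} [Fintype V₁] [Fintype V₂] [DecidableEq V₁] [DecidableEq V₂]
    (G₁ : SimpleGraph V₁) (G₂ : SimpleGraph V₂)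
    [DecidableRel G₁.Adj] [DecidableRel G₂.Adj]
    (X X' : V₁) (Y Y' : V₂) :
    ∃ e : (V₁ ⊕ {v : V₂ // v ≠ Y}) ≃ (V₁ ⊕ {v : V₂ // v ≠ Y'}),
      ∃ T : Matrix (V₁ ⊕ {v : V₂ // v ≠ Y'}) (V₁ ⊕ {v : V₂ // v ≠ Y'}) ℤ,
        IsUnit T.det ∧
        Tᵀ * (Matrix.reindex e e ((wedgeGraph G₁ G₂ X Y).lapMatrix ℤ)) * T =
          (wedgeGraph G₁ G₂ X' Y').lapMatrix ℤ :=
  ⟨.sumCongr (.refl V₁) ((Equiv.swap Y Y').subtypeEquiv fun v => by simp [Equiv.swap_apply_eq_iff]),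
    Matrix.exists_isUnit_det_transpose_mul_reindex_mul_eq _ _ _
      (.ofLinearMap (wedgeRebase ℤ X X' Y Y') (wedgeRebase ℤ X' X Y' Y)
        (wedgeRebase_comp_wedgeRebase X' X Y' Y) (wedgeRebase_comp_wedgeRebase X X' Y Y'))
      (dotProduct_lapMatrix_wedgeGraph_wedgeRebase G₁ G₂ X X' Y Y')⟩

/-- The equivalence class over `ℤ` of the quadratic form of the combinatorial Laplacian of
the wedge sum `G₁ ∨_{X,Y} G₂` is independent of the choices of `X` and `Y`. -/
theorem stmt_8 {V₁ V₂ : Type*} [Fintype V₁] [Fintype V₂] [DecidableEq V₁] [DecidableEq V₂]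
    (G₁ : SimpleGraph V₁) (G₂ : SimpleGraph V₂)
    [DecidableRel G₁.Adj] [DecidableRel G₂.Adj]
    (hc₁ : G₁.Connected) (hc₂ : G₂.Connected)
    (X X' : V₁) (Y Y' : V₂) :
    ∃ e : (V₁ ⊕ {v : V₂ // v ≠ Y}) ≃ (V₁ ⊕ {v : V₂ // v ≠ Y'}),
      ∃ T : Matrix (V₁ ⊕ {v : V₂ // v ≠ Y'}) (V₁ ⊕ {v : V₂ // v ≠ Y'}) ℤ,
        IsUnit T.det ∧
        Tᵀ * (Matrix.reindex e e ((wedgeGraph G₁ G₂ X Y).lapMatrix ℤ)) * T =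
          (wedgeGraph G₁ G₂ X' Y').lapMatrix ℤ :=
  stmt_8_general G₁ G₂ X X' Y Y'
end

section
/- Any two trees with the same number n of vertices have combinatorial Laplacians that represent equivalent quadratic forms over ℤ; that is, if T₁ and T₂ are trees on n vertices with Laplacians L₁, L₂, there exists P ∈ GL(n,ℤ) with PᵀL₁P = L₂. -/
/-!
Over any commutative ring, every tree Laplacian is congruent to `diag(1, …, 1, 0)`, with the zero
at any prescribed vertex `v`. Induct on the number of vertices: pick a leaf `u ≠ v` with neighbour
`w`. Adding row and column `u` to row and column `w` (a unimodular transvection) kills the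
off-diagonal entries of row and column `u`, leaves a `1` at `(u, u)`, and subtracts the edge `uw`
from the `(w, w)` entry, so the Laplacian splits as the Laplacian of the tree with `u` deleted plus
a `1 × 1` identity block. Two trees on `n` vertices are thus congruent to the same diagonal matrix.
-/

open Matrix

namespace Matrix

variable {m n R : Type*} [DecidableEq n] [CommRing R]

theorem transpose_transvection (i j : n) (c : R) :
    (transvection i j c)ᵀ = transvection j i c := by
  simp [transvection, transpose_single]

variable [Fintype m] [Fintype n] [DecidableEq m]

def Congruent (A B : Matrix n n R) : Prop :=
  ∃ P : Matrix n n R, IsUnit P.det ∧ Pᵀ * A * P = B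

namespace Congruent

@[refl]
theorem refl (A : Matrix n n R) : Congruent A A :=
  ⟨1, by simp, by simp⟩

@[symm]
theorem symm {A B : Matrix n n R} (h : Congruent A B) : Congruent B A := by
  obtain ⟨P, hP, rfl⟩ := h
  have hPt : IsUnit Pᵀ.det := by rwa [det_transpose]
  refine ⟨P⁻¹, isUnit_nonsing_inv_det P hP, ?_⟩
  rw [transpose_nonsing_inv, Matrix.mul_assoc, Matrix.mul_assoc, mul_nonsing_inv P hP,
    Matrix.mul_one, ← Matrix.mul_assoc, nonsing_inv_mul _ hPt, Matrix.one_mul]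

@[trans]
theorem trans {A B C : Matrix n n R} (h₁ : Congruent A B) (h₂ : Congruent B C) :
    Congruent A C := by
  obtain ⟨P, hP, rfl⟩ := h₁
  obtain ⟨Q, hQ, rfl⟩ := h₂
  exact ⟨P * Q, by simpa using hP.mul hQ, by simp only [transpose_mul, Matrix.mul_assoc]⟩

theorem reindex {A B : Matrix m m R} (e : m ≃ n) (h : Congruent A B) :
    Congruent (reindex e e A) (reindex e e B) := by
  obtain ⟨P, hP, rfl⟩ := h
  refine ⟨Matrix.reindex e e P, by rwa [det_reindex_self], ?_⟩
  simp only [reindex_apply, transpose_submatrix, submatrix_mul_equiv]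

theorem fromBlocks {A B : Matrix m m R} {C D : Matrix n n R} (h₁ : Congruent A B)
    (h₂ : Congruent C D) : Congruent (fromBlocks A 0 0 C) (fromBlocks B 0 0 D) := by
  obtain ⟨P, hP, rfl⟩ := h₁
  obtain ⟨Q, hQ, rfl⟩ := h₂
  refine ⟨Matrix.fromBlocks P 0 0 Q, by simpa [det_fromBlocks_zero₂₁] using hP.mul hQ, ?_⟩
  simp [fromBlocks_transpose, fromBlocks_multiply]

end Congruent

theorem transvection_mul_apply (i j : n) (c : R) (M : Matrix n n R) (a b : n) :
    (transvection i j c * M) a b = M a b + if a = i then c * M j b else 0 := by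
  split_ifs with h
  · rw [h, transvection_mul_apply_same]
  · simp [h]

theorem mul_transvection_apply (i j : n) (c : R) (M : Matrix n n R) (a b : n) :
    (M * transvection i j c) a b = M a b + if b = j then c * M a i else 0 := by
  split_ifs with h
  · rw [h, mul_transvection_apply_same]
  · simp [h]

end Matrix

namespace SimpleGraph

variable {V R : Type*} [Fintype V] (G : SimpleGraph V) [DecidableRel G.Adj]

variable {G} in
theorem adj_iff_eq_of_degree_eq_one {u w : V} (hu : G.degree u = 1) (huw : G.Adj u w) (x : V) :
    G.Adj u x ↔ x = w := by
  obtain ⟨w', -, hw'⟩ := degree_eq_one_iff_existsUnique_adj.mp hu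
  exact ⟨fun h => (hw' x h).trans (hw' w huw).symm, by rintro rfl; exact huw⟩

variable [DecidableEq V]

theorem lapMatrix_apply [AddGroupWithOne R] (x y : V) :
    G.lapMatrix R x y = (if x = y then (G.degree x : R) else 0) - if G.Adj x y then 1 else 0 := by
  simp [lapMatrix, degMatrix, diagonal_apply]

theorem degree_induce_compl_singleton [AddCommMonoidWithOne R] (u : V)
    (x : ↥({u}ᶜ : Set V)) :
    ((G.induce {u}ᶜ).degree x : R) + (if G.Adj x u then 1 else 0) = G.degree x := by
  rw [degree_eq_sum_if_adj (G.induce {u}ᶜ), degree_eq_sum_if_adj G,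
    Fintype.sum_eq_add_sum_subtype_ne _ u, add_comm]
  rfl

theorem lapMatrix_induce_compl_singleton_apply [AddCommGroupWithOne R] (u : V)
    (x y : ↥({u}ᶜ : Set V)) :
    (G.induce {u}ᶜ).lapMatrix R x y =
      G.lapMatrix R x y - if (x : V) = y ∧ G.Adj x u then 1 else 0 := by
  rw [lapMatrix_apply, lapMatrix_apply, ← G.degree_induce_compl_singleton u x]
  by_cases hxy : x = y <;> by_cases hxu : G.Adj x u <;> simp [hxy, hxu, Subtype.coe_inj]

theorem lapMatrix_apply_of_degree_eq_one [AddGroupWithOne R] {u w : V} (hu : G.degree u = 1)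
    (huw : G.Adj u w) (y : V) :
    G.lapMatrix R u y = (if y = u then 1 else 0) - if y = w then 1 else 0 := by
  rw [lapMatrix_apply]
  simp only [adj_iff_eq_of_degree_eq_one hu huw, hu, Nat.cast_one, @eq_comm _ u y]

theorem lapMatrix_congruent_fromBlocks_of_degree_eq_one [CommRing R] {u : V}
    (hu : G.degree u = 1) :
    (G.lapMatrix R).Congruent
      (reindex (Equiv.sumCompl (· ∈ ({u}ᶜ : Set V))) (Equiv.sumCompl (· ∈ ({u}ᶜ : Set V)))
        (fromBlocks ((G.induce {u}ᶜ).lapMatrix R) 0 0 1)) := by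
  obtain ⟨w, huw, -⟩ := degree_eq_one_iff_existsUnique_adj.mp hu
  refine ⟨transvection u w 1, by rw [det_transvection_of_ne _ _ huw.ne]; exact isUnit_one, ?_⟩
  have hrow := G.lapMatrix_apply_of_degree_eq_one (R := R) hu huw
  have hcol (x : V) : G.lapMatrix R x u = (if x = u then 1 else 0) - if x = w then 1 else 0 := by
    rw [← hrow, (G.isSymm_lapMatrix R).apply]
  have hadj (x : V) : G.Adj x u ↔ x = w := by
    rw [G.adj_comm, adj_iff_eq_of_degree_eq_one hu huw]
  ext x y
  rw [transpose_transvection, reindex_apply, submatrix_apply, mul_transvection_apply,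
    transvection_mul_apply, transvection_mul_apply]
  by_cases hx : x = u <;> by_cases hy : y = u
  · subst hx hy
    simp [Equiv.sumCompl_symm_apply_of_neg, hrow, huw.ne]
  · subst hx
    simp [Equiv.sumCompl_symm_apply_of_neg, Equiv.sumCompl_symm_apply_of_pos, hy, hrow, huw.ne]
  · subst hy
    simp [Equiv.sumCompl_symm_apply_of_neg, Equiv.sumCompl_symm_apply_of_pos, hx, hcol, huw.ne]
  · simp only [Equiv.sumCompl_symm_apply_of_pos (p := (· ∈ ({u}ᶜ : Set V))) hx,
      Equiv.sumCompl_symm_apply_of_pos (p := (· ∈ ({u}ᶜ : Set V))) hy, fromBlocks_apply₁₁,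
      lapMatrix_induce_compl_singleton_apply, hcol, hrow, hadj, hx, hy]
    by_cases hxw : x = w <;> by_cases hyw : y = w <;>
      simp [hxw, hyw, huw.ne, @eq_comm _ w y, sub_eq_add_neg]

theorem IsTree.lapMatrix_congruent_diagonal [CommRing R] {G : SimpleGraph V} [DecidableRel G.Adj]
    (hG : G.IsTree) (v : V) :
    (G.lapMatrix R).Congruent (diagonal fun x => if x = v then 0 else 1) := by
  refine Finite.induction_subsingleton_or_nontrivial (P := fun V => ∀ [Fintype V] [DecidableEq V]
    (G : SimpleGraph V) [DecidableRel G.Adj], G.IsTree → ∀ v : V,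
      (G.lapMatrix R).Congruent (diagonal fun x => if x = v then 0 else 1)) V ?_ ?_ G hG v
  · intro V _ _ _ _ G _ _ v
    have hL : G.lapMatrix R = diagonal fun x => if x = v then 0 else 1 := by
      ext x y
      obtain rfl := Subsingleton.elim x v
      obtain rfl := Subsingleton.elim y x
      simp [lapMatrix_apply]
    exact hL ▸ Matrix.Congruent.refl _
  · intro V _ _ ih _ _ G _ hG v
    obtain ⟨u, huv, hu⟩ : ∃ u, u ≠ v ∧ G.degree u = 1 := by
      obtain ⟨u₁, u₂, hne, h₁, h₂⟩ := hG.exists_ne_and_degree_eq_one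
      by_cases h : u₁ = v
      · exact ⟨u₂, h ▸ hne.symm, h₂⟩
      · exact ⟨u₁, h, h₁⟩
    have hT : (G.induce {u}ᶜ).IsTree :=
      ⟨hG.connected.induce_compl_singleton_of_degree_eq_one hu, hG.isAcyclic.induce _⟩
    have hlt : Nat.card ↥({u}ᶜ : Set V) < Nat.card V := Finite.card_subtype_lt (x := u) (by simp)
    have hv : v ∈ ({u}ᶜ : Set V) := huv.symm
    set e := Equiv.sumCompl (· ∈ ({u}ᶜ : Set V))
    have hD : reindex e e (fromBlocks (diagonal fun x => if x = ⟨v, hv⟩ then 0 else 1) 0 0 1) =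
        diagonal fun x => if x = v then (0 : R) else 1 := by
      rw [← diagonal_one, fromBlocks_diagonal, reindex_apply, submatrix_diagonal_equiv]
      congr 1
      funext x
      by_cases hx : x = u
      · simp [e, hx, Equiv.sumCompl_symm_apply_of_neg, huv]
      · simp [e, Equiv.sumCompl_symm_apply_of_pos (p := (· ∈ ({u}ᶜ : Set V))) hx,
          Subtype.ext_iff]
    rw [← hD]
    exact (G.lapMatrix_congruent_fromBlocks_of_degree_eq_one hu).trans
      (((ih _ hlt _ hT ⟨v, hv⟩).fromBlocks (.refl 1)).reindex e)

end SimpleGraph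

/-- Any two trees on `n` vertices have combinatorial Laplacians representing equivalent
quadratic forms over `ℤ`. -/
theorem stmt_11 (n : ℕ) (T₁ T₂ : SimpleGraph (Fin n))
    [DecidableRel T₁.Adj] [DecidableRel T₂.Adj]
    (h₁ : T₁.IsTree) (h₂ : T₂.IsTree) :
    ∃ P : Matrix (Fin n) (Fin n) ℤ, IsUnit P.det ∧
      Pᵀ * T₁.lapMatrix ℤ * P = T₂.lapMatrix ℤ := by
  obtain ⟨v⟩ := h₁.connected.nonempty
  exact (h₁.lapMatrix_congruent_diagonal v).trans (h₂.lapMatrix_congruent_diagonal v).symm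
end

section
/- Let M and M₁ be the combinatorial Laplacians of two graphs G, G₁ on n vertices, and suppose there is a bijection Q of the index set {1,…,n}² (acting linearly on n×n matrices by permuting entries) such that Q((M+uI)⁻¹) = (M₁+uI)⁻¹ for all u in some infinite set of positive reals. Then G and G₁ are cospectral (M and M₁ have the same characteristic polynomial), and for each common eigenvalue λ_k, Q maps the entrywise spectral projection matrix Π_k of M to the spectral projection Π'_k of M₁. -/
/-!
Over its spectral decomposition `M = ∑ λₖ • Πₖ` the resolvent is the partial-fraction sum
`(M + u • 1)⁻¹ = ∑ (u + λₖ)⁻¹ • Πₖ`, and such a sum determines its coefficients from its values at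
infinitely many `u` (clear denominators and evaluate the resulting polynomial at `-λₖ`).
Comparing coefficients entrywise after applying `Q` gives `Q Πₖ = Π'ₖ'` when `λₖ = λ'ₖ'`;
summing these gives `Q 1 = 1`, so `Q` permutes the diagonal positions and preserves traces.
Hence `tr (M + u • 1)⁻¹ = ∑ᵢ (u + μᵢ)⁻¹`, summed over the eigenvalues with multiplicity, is the
same for `M` and `M₁`, and comparing coefficients once more shows the multiplicities agree.
-/

open Matrix

/-- The action of a permutation `Q` of the index set `{1,…,n}²` on `n × n` matrices,
permuting the entries. -/
def entryPerm {n : ℕ} (Q : Equiv.Perm (Fin n × Fin n))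
    (B : Matrix (Fin n) (Fin n) ℝ) : Matrix (Fin n) (Fin n) ℝ :=
  Matrix.of fun x y => B (Q (x, y)).1 (Q (x, y)).2

open Polynomial Finset

theorem eq_zero_of_sum_div_add_eq_zero {S : Set ℝ} (hS : S.Infinite) {T : Finset ℝ}
    {d : ℝ → ℝ} (h : ∀ u ∈ S, ∑ t ∈ T, d t / (u + t) = 0) {t : ℝ} (ht : t ∈ T) :
    d t = 0 := by
  set P : ℝ[X] := ∑ s ∈ T, C (d s) * ∏ r ∈ T.erase s, (X + C r)
  have hP : P = 0 := by
    refine P.eq_zero_of_infinite_isRoot ((hS.sdiff (T.image Neg.neg).finite_toSet).mono ?_)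
    rintro u ⟨huS, huT⟩
    have hpole : ∀ s ∈ T, u + s ≠ 0 := fun s hs hu =>
      huT (mem_image.2 ⟨s, hs, by linarith⟩)
    have heval : P.eval u = (∏ r ∈ T, (u + r)) * ∑ s ∈ T, d s / (u + s) := by
      simp only [P, mul_sum, eval_finsetSum, eval_mul, eval_C, eval_prod, eval_add, eval_X]
      refine sum_congr rfl fun s hs => ?_
      rw [← mul_prod_erase T _ hs]
      field_simp [hpole s hs]
    simp [heval, h u huS]
  have hPt : P.eval (-t) = d t * ∏ r ∈ T.erase t, (r - t) := by
    simp only [P, eval_finsetSum, eval_mul, eval_C, eval_prod, eval_add, eval_X]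
    rw [sum_eq_single_of_mem t ht fun s hs hst => mul_eq_zero_of_right _
      (prod_eq_zero (mem_erase.2 ⟨hst.symm, ht⟩) (neg_add_cancel t))]
    simp only [neg_add_eq_sub]
  have hprod : ∏ r ∈ T.erase t, (r - t) ≠ 0 :=
    prod_ne_zero_iff.2 fun r hr => sub_ne_zero.2 (ne_of_mem_erase hr)
  simpa [hP, hprod] using hPt.symm

theorem sum_filter_eq_zero_of_sum_div_add_eq_zero {ι : Type*} [Fintype ι] {S : Set ℝ}
    (hS : S.Infinite) {a c : ι → ℝ} (h : ∀ u ∈ S, ∑ i, c i / (u + a i) = 0) (t : ℝ) :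
    ∑ i with a i = t, c i = 0 := by
  classical
  by_cases ht : t ∈ univ.image a
  · refine eq_zero_of_sum_div_add_eq_zero (d := fun t => ∑ i with a i = t, c i) hS
      (fun u hu => ?_) ht
    rw [← h u hu, ← sum_fiberwise_of_maps_to (fun i _ => mem_image_of_mem a (mem_univ i))]
    refine sum_congr rfl fun s _ => ?_
    rw [sum_div]
    exact sum_congr rfl fun i hi => by rw [(mem_filter.1 hi).2]
  · rw [sum_eq_zero]
    intro i hi
    exact absurd (mem_image.2 ⟨i, mem_univ i, (mem_filter.1 hi).2⟩) ht

theorem sum_filter_eq_of_sum_div_add_eq {ι κ : Type*} [Fintype ι] [Fintype κ] {S : Set ℝ}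
    (hS : S.Infinite) {a : ι → ℝ} {b : κ → ℝ} {c : ι → ℝ} {e : κ → ℝ}
    (h : ∀ u ∈ S, ∑ i, c i / (u + a i) = ∑ j, e j / (u + b j)) (t : ℝ) :
    ∑ i with a i = t, c i = ∑ j with b j = t, e j := by
  have hzero := sum_filter_eq_zero_of_sum_div_add_eq_zero hS (a := Sum.elim a b)
    (c := Sum.elim c (-e)) (fun u hu => by simp [Fintype.sum_sum_type, neg_div, h u hu]) t
  have hsplit : ∑ i with a i = t, c i + ∑ j with b j = t, -e j = 0 := by
    simp only [sum_filter, Fintype.sum_sum_type, Sum.elim_inl, Sum.elim_inr, Pi.neg_apply]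
      at hzero ⊢
    exact hzero
  rw [sum_neg_distrib] at hsplit
  linarith

theorem Finset.sum_eq_sum_of_sum_filter_eq {ι κ β M : Type*} [Fintype ι] [Fintype κ]
    [DecidableEq β] [AddCommMonoid M] {a : ι → β} {b : κ → β} {f : ι → M} {g : κ → M}
    (h : ∀ t, ∑ i with a i = t, f i = ∑ j with b j = t, g j) : ∑ i, f i = ∑ j, g j := by
  rw [← sum_fiberwise_of_maps_to (t := univ.image a ∪ univ.image b) (g := a) (by simp),
    ← sum_fiberwise_of_maps_to (t := univ.image a ∪ univ.image b) (g := b) (by simp)]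
  exact sum_congr rfl fun t _ => h t

theorem Matrix.sum_filter_eq_of_sum_inv_add_smul_eq {ι κ m n : Type*} [Fintype ι] [Fintype κ]
    {S : Set ℝ} (hS : S.Infinite) {a : ι → ℝ} {b : κ → ℝ} {A : ι → Matrix m n ℝ}
    {B : κ → Matrix m n ℝ}
    (h : ∀ u ∈ S, ∑ i, (u + a i)⁻¹ • A i = ∑ j, (u + b j)⁻¹ • B j) (t : ℝ) :
    ∑ i with a i = t, A i = ∑ j with b j = t, B j := by
  ext x y
  simp only [sum_apply]
  refine sum_filter_eq_of_sum_div_add_eq hS (fun u hu => ?_) t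
  simpa [sum_apply, div_eq_inv_mul] using congrFun (congrFun (h u hu) x) y

theorem Matrix.inv_sum_smul_add_smul_one {ι n K : Type*} [Fintype ι] [DecidableEq ι]
    [Fintype n] [DecidableEq n] [Field K] {lam : ι → K} {P : ι → Matrix n n K}
    (hsum : ∑ k, P k = 1) (hidem : ∀ k, P k * P k = P k)
    (horth : ∀ k l, k ≠ l → P k * P l = 0) {u : K} (hu : ∀ k, u + lam k ≠ 0) :
    (∑ k, lam k • P k + u • 1)⁻¹ = ∑ k, (u + lam k)⁻¹ • P k := by
  have hmul : ∀ k l, (u + lam k) • P k * ((u + lam l)⁻¹ • P l) =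
      if k = l then P k else 0 := by
    intro k l
    split_ifs with hkl
    · rw [hkl, smul_mul_smul_comm, mul_inv_cancel₀ (hu l), one_smul, hidem]
    · rw [smul_mul_smul_comm, horth k l hkl, smul_zero]
  apply inv_eq_right_inv
  rw [← hsum, smul_sum, ← sum_add_distrib]
  simp_rw [← add_smul, add_comm (lam _) u, sum_mul_sum, hmul, sum_ite_eq, if_pos (mem_univ _)]

section entryPerm

variable {n : ℕ} (Q : Equiv.Perm (Fin n × Fin n))

theorem entryPerm_sum {ι : Type*} (s : Finset ι) (A : ι → Matrix (Fin n) (Fin n) ℝ) :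
    entryPerm Q (∑ i ∈ s, A i) = ∑ i ∈ s, entryPerm Q (A i) := by
  ext x y
  simp [entryPerm, Matrix.sum_apply]

theorem entryPerm_smul (c : ℝ) (A : Matrix (Fin n) (Fin n) ℝ) :
    entryPerm Q (c • A) = c • entryPerm Q A := by
  ext x y
  simp [entryPerm]

theorem trace_entryPerm_of_entryPerm_one (hQ : entryPerm Q 1 = 1)
    (A : Matrix (Fin n) (Fin n) ℝ) : (entryPerm Q A).trace = A.trace := by
  have hdiag : ∀ x, (Q (x, x)).2 = (Q (x, x)).1 := fun x => by
    by_contra hne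
    simpa [entryPerm, one_apply_ne' hne] using congrFun (congrFun hQ x) x
  have hinj : Function.Injective fun x => (Q (x, x)).1 := fun x y hxy => by
    have : Q (x, x) = Q (y, y) := Prod.ext hxy (by simpa only [hdiag] using hxy)
    simpa using Q.injective this
  simp only [trace, Matrix.diag, entryPerm, of_apply, hdiag]
  exact (Finite.injective_iff_bijective.1 hinj).sum_comp fun x => A x x

end entryPerm

theorem Matrix.IsHermitian.trace_inv_add_smul_one {n : Type*} [Fintype n] [DecidableEq n]
    {A : Matrix n n ℝ} (hA : A.IsHermitian) {u : ℝ} (hu : ∀ i, u + hA.eigenvalues i ≠ 0) :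
    (A + u • 1)⁻¹.trace = ∑ i, (u + hA.eigenvalues i)⁻¹ := by
  set U : Matrix n n ℝ := (hA.eigenvectorUnitary : Matrix n n ℝ)
  have hUU : star U * U = 1 := Unitary.coe_star_mul_self _
  have hUU' : U * star U = 1 := Unitary.coe_mul_star_self _
  have hshift : A + u • 1 = U * diagonal (fun i => u + hA.eigenvalues i) * star U := by
    have hdiag : diagonal (fun i => u + hA.eigenvalues i) = diagonal hA.eigenvalues + u • 1 := by
      rw [smul_one_eq_diagonal, diagonal_add]
      simp only [add_comm]
    rw [hdiag, mul_add, add_mul, Matrix.mul_smul, Matrix.smul_mul, mul_one, hUU']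
    conv_lhs => rw [hA.spectral_theorem, Unitary.conjStarAlgAut_apply]
    simp [U, RCLike.ofReal_real_eq_id]
  have hinv : (A + u • 1)⁻¹ = U * diagonal (fun i => (u + hA.eigenvalues i)⁻¹) * star U := by
    refine inv_eq_right_inv ?_
    rw [hshift, show ∀ D D' : Matrix n n ℝ, U * D * star U * (U * D' * star U) =
      U * (D * (star U * U) * D') * star U from fun D D' => by noncomm_ring, hUU, mul_one,
      diagonal_mul_diagonal]
    simp [mul_inv_cancel₀ (hu _), hUU']
  rw [hinv, trace_mul_cycle, hUU, one_mul, trace_diagonal]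

theorem Matrix.IsHermitian.charpoly_eq_of_trace_inv_add_smul_one_eq {n : Type*} [Fintype n]
    [DecidableEq n] {A B : Matrix n n ℝ} (hA : A.IsHermitian) (hB : B.IsHermitian)
    {S : Set ℝ} (hS : S.Infinite) (h : ∀ u ∈ S, (A + u • 1)⁻¹.trace = (B + u • 1)⁻¹.trace) :
    A.charpoly = B.charpoly := by
  have hS' := hS.sdiff ((Set.finite_range fun i => -hA.eigenvalues i).union
    (Set.finite_range fun i => -hB.eigenvalues i))
  have hmult : ∀ t, #{i | hA.eigenvalues i = t} = #{i | hB.eigenvalues i = t} := by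
    intro t
    have hcount := sum_filter_eq_of_sum_div_add_eq hS' (a := hA.eigenvalues)
      (b := hB.eigenvalues) (c := fun _ => (1 : ℝ)) (e := fun _ => 1) (fun u hu => ?_) t
    · simpa using hcount
    simp only [one_div]
    rw [← hA.trace_inv_add_smul_one fun i hi => hu.2 (.inl ⟨i, by linarith⟩),
      ← hB.trace_inv_add_smul_one fun i hi => hu.2 (.inr ⟨i, by linarith⟩)]
    exact h u hu.1
  have hmset : univ.val.map hA.eigenvalues = univ.val.map hB.eigenvalues := by
    ext t
    simp only [Multiset.count_map, eq_comm (a := t)]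
    exact hmult t
  rw [hA.charpoly_eq, hB.charpoly_eq, prod_eq_multiset_prod, prod_eq_multiset_prod]
  have hprod := congrArg (fun s => (s.map fun t => (X - C t : ℝ[X])).prod) hmset
  simp only [Multiset.map_map, Function.comp_def] at hprod
  simpa using hprod

theorem stmt_15_general (n m m' : ℕ) (G G₁ : SimpleGraph (Fin n))
    [DecidableRel G.Adj] [DecidableRel G₁.Adj]
    (lam : Fin (m + 1) → ℝ) (Pr : Fin (m + 1) → Matrix (Fin n) (Fin n) ℝ)
    (lam' : Fin (m' + 1) → ℝ) (Pr' : Fin (m' + 1) → Matrix (Fin n) (Fin n) ℝ)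
    (hmono : StrictMono lam) (hmono' : StrictMono lam')
    (hsum : ∑ k, Pr k = 1) (hsum' : ∑ k, Pr' k = 1)
    (hidem : ∀ k, Pr k * Pr k = Pr k) (hidem' : ∀ k, Pr' k * Pr' k = Pr' k)
    (horth : ∀ k l, k ≠ l → Pr k * Pr l = 0)
    (horth' : ∀ k l, k ≠ l → Pr' k * Pr' l = 0)
    (hM : G.lapMatrix ℝ = ∑ k, lam k • Pr k)
    (hM' : G₁.lapMatrix ℝ = ∑ k, lam' k • Pr' k)
    (Q : Equiv.Perm (Fin n × Fin n))
    (S : Set ℝ) (hS : S.Infinite)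
    (hQ : ∀ u ∈ S,
      entryPerm Q (G.lapMatrix ℝ + u • (1 : Matrix (Fin n) (Fin n) ℝ))⁻¹ =
        (G₁.lapMatrix ℝ + u • (1 : Matrix (Fin n) (Fin n) ℝ))⁻¹) :
    (G.lapMatrix ℝ).charpoly = (G₁.lapMatrix ℝ).charpoly ∧
    ∀ k k', lam k = lam' k' → entryPerm Q (Pr k) = Pr' k' := by
  have hS' := hS.sdiff ((Set.finite_range fun k => -lam k).union
    (Set.finite_range fun k => -lam' k))
  have hfiber : ∀ t, ∑ k with lam k = t, entryPerm Q (Pr k) = ∑ k with lam' k = t, Pr' k := by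
    refine sum_filter_eq_of_sum_inv_add_smul_eq hS' fun u hu => ?_
    rw [← inv_sum_smul_add_smul_one hsum' hidem' horth' fun k hk => hu.2 (.inr ⟨k, by linarith⟩),
      ← hM', ← hQ u hu.1, hM,
      inv_sum_smul_add_smul_one hsum hidem horth fun k hk => hu.2 (.inl ⟨k, by linarith⟩),
      entryPerm_sum]
    simp only [entryPerm_smul]
  have hone : entryPerm Q 1 = 1 := by
    conv_lhs => rw [← hsum]
    rw [← hsum', entryPerm_sum]
    exact sum_eq_sum_of_sum_filter_eq hfiber
  refine ⟨(G.isHermitian_lapMatrix ℝ).charpoly_eq_of_trace_inv_add_smul_one_eq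
    (G₁.isHermitian_lapMatrix ℝ) hS fun u hu => ?_, fun k k' hkk' => ?_⟩
  · rw [← hQ u hu, trace_entryPerm_of_entryPerm_one Q hone]
  · have hk := hfiber (lam k)
    simp only [hmono.injective.eq_iff] at hk
    rw [hkk'] at hk
    simpa [hmono'.injective.eq_iff, filter_eq'] using hk

/-- If a permutation `Q` of matrix-entry positions carries `(M+uI)⁻¹` to `(M₁+uI)⁻¹` for all
`u` in an infinite set of positive reals, where `M, M₁` are the Laplacians of graphs
`G, G₁` with spectral decompositions `M = Σ λₖ•Πₖ`, `M₁ = Σ λ'ₖ•Π'ₖ`, then the graphs are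
cospectral, and for each common eigenvalue `Q` carries the spectral projection of `M` to
that of `M₁`. -/
theorem stmt_15 (n m m' : ℕ) (G G₁ : SimpleGraph (Fin n))
    [DecidableRel G.Adj] [DecidableRel G₁.Adj]
    (lam : Fin (m + 1) → ℝ) (Pr : Fin (m + 1) → Matrix (Fin n) (Fin n) ℝ)
    (lam' : Fin (m' + 1) → ℝ) (Pr' : Fin (m' + 1) → Matrix (Fin n) (Fin n) ℝ)
    (hmono : StrictMono lam) (hmono' : StrictMono lam')
    (hsum : ∑ k, Pr k = 1) (hsum' : ∑ k, Pr' k = 1)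
    (hidem : ∀ k, Pr k * Pr k = Pr k) (hidem' : ∀ k, Pr' k * Pr' k = Pr' k)
    (horth : ∀ k l, k ≠ l → Pr k * Pr l = 0)
    (horth' : ∀ k l, k ≠ l → Pr' k * Pr' l = 0)
    (hne : ∀ k, Pr k ≠ 0) (hne' : ∀ k, Pr' k ≠ 0)
    (hM : G.lapMatrix ℝ = ∑ k, lam k • Pr k)
    (hM' : G₁.lapMatrix ℝ = ∑ k, lam' k • Pr' k)
    (Q : Equiv.Perm (Fin n × Fin n))
    (S : Set ℝ) (hS : S.Infinite) (hSpos : ∀ u ∈ S, 0 < u)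
    (hQ : ∀ u ∈ S,
      entryPerm Q (G.lapMatrix ℝ + u • (1 : Matrix (Fin n) (Fin n) ℝ))⁻¹ =
        (G₁.lapMatrix ℝ + u • (1 : Matrix (Fin n) (Fin n) ℝ))⁻¹) :
    (G.lapMatrix ℝ).charpoly = (G₁.lapMatrix ℝ).charpoly ∧
    ∀ k k', lam k = lam' k' → entryPerm Q (Pr k) = Pr' k' :=
  stmt_15_general n m m' G G₁ lam Pr lam' Pr' hmono hmono' hsum hsum' hidem hidem' horth horth' hM
    hM' Q S hS hQ
end
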